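/- Let n ≥ 1, let D ⊆ ℝ^{2n} be open, let J be a C¹ almost complex structure on D, let Ω ⊆ ℂ be open, let f : Ω → D be a C² J-holomorphic map, and let u : D → ℝ be C². Then for every ζ ∈ Ω, Δ(u∘f)(ζ) = ℒ(u)_{f(ζ)}(df_ζ(1)), where Δ is the Euclidean Laplacian on ℝ² ≅ ℂ and df_ζ(1) = ∂f/∂x(ζ). (The Laplacian of the pullback of u along a J-holomorphic disk equals the Levi form of u evaluated on the x-derivative of the disk.) -/

import Mathlib

open Filter Topology

/-- The 2-form `ddᶜu` associated with an almost complex structure `J`. -/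
noncomputable def acDDc {E : Type*} [NormedAddCommGroup E] [NormedSpace ℝ E]
    (J : E → (E →L[ℝ] E)) (u : E → ℝ) (z v w : E) : ℝ :=
  - fderiv ℝ (fun z' => fderiv ℝ u z' (J z' w)) z v
    + fderiv ℝ (fun z' => fderiv ℝ u z' (J z' v)) z w

/-- The Levi form `ℒ(u)_z(v) := ddᶜu_z(v, J(z)v)`. -/
noncomputable def acLevi {E : Type*} [NormedAddCommGroup E] [NormedSpace ℝ E]
    (J : E → (E →L[ℝ] E)) (u : E → ℝ) (z v : E) : ℝ :=
  acDDc J u z v (J z v)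

/-- `f : Ω → E` is `J`-holomorphic on `Ω` if `df_ζ(iξ) = J(f(ζ))(df_ζ(ξ))`. -/
def IsJHolo {E : Type*} [NormedAddCommGroup E] [NormedSpace ℝ E]
    (J : E → (E →L[ℝ] E)) (Ω : Set ℂ) (f : ℂ → E) : Prop :=
  ∀ ζ ∈ Ω, ∀ ξ : ℂ, fderiv ℝ f ζ (Complex.I * ξ) = J (f ζ) (fderiv ℝ f ζ ξ)

/-- Euclidean Laplacian of a function on ℂ ≅ ℝ². -/
noncomputable def lap (g : ℂ → ℝ) (ζ : ℂ) : ℝ :=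
  fderiv ℝ (fun w => fderiv ℝ g w 1) ζ 1
    + fderiv ℝ (fun w => fderiv ℝ g w Complex.I) ζ Complex.I
theorem stmt_7 {n : ℕ} (hn : 1 ≤ n)
    (D : Set (EuclideanSpace ℝ (Fin (2 * n)))) (hD : IsOpen D)
    (J : EuclideanSpace ℝ (Fin (2 * n)) →
      (EuclideanSpace ℝ (Fin (2 * n)) →L[ℝ] EuclideanSpace ℝ (Fin (2 * n))))
    (hJ : ContDiffOn ℝ 1 J D)
    (hJsq : ∀ z ∈ D, (J z).comp (J z) =
      - ContinuousLinearMap.id ℝ (EuclideanSpace ℝ (Fin (2 * n))))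
    (Ω : Set ℂ) (hΩ : IsOpen Ω)
    (f : ℂ → EuclideanSpace ℝ (Fin (2 * n)))
    (hf : ContDiffOn ℝ 2 f Ω) (hfD : Set.MapsTo f Ω D)
    (hfJ : IsJHolo J Ω f)
    (u : EuclideanSpace ℝ (Fin (2 * n)) → ℝ)
    (hu : ContDiffOn ℝ 2 u D) :
    ∀ ζ ∈ Ω, lap (u ∘ f) ζ = acLevi J u (f ζ) (fderiv ℝ f ζ 1) := by
  intro ζ hζ
  have hζD : f ζ ∈ D := hfD hζ
  have hDz : D ∈ 𝓝 (f ζ) := hD.mem_nhds hζD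
  have hΩζ : Ω ∈ 𝓝 ζ := hΩ.mem_nhds hζ
  have hu2 : ContDiffAt ℝ 2 u (f ζ) := hu.contDiffAt hDz
  have hf2 : ContDiffAt ℝ 2 f ζ := hf.contDiffAt hΩζ
  have hJ1 : ContDiffAt ℝ 1 J (f ζ) := hJ.contDiffAt hDz
  -- basic differentiability facts
  have hudiff : ∀ z' ∈ D, DifferentiableAt ℝ u z' := fun z' hz' =>
    (hu.contDiffAt (hD.mem_nhds hz')).differentiableAt (by norm_num)
  have hfdiff : ∀ ζ' ∈ Ω, DifferentiableAt ℝ f ζ' := fun ζ' hζ' =>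
    (hf.contDiffAt (hΩ.mem_nhds hζ')).differentiableAt (by norm_num)
  have hdu : DifferentiableAt ℝ (fderiv ℝ u) (f ζ) :=
    (hu2.fderiv_right (m := 1) (by norm_num)).differentiableAt one_ne_zero
  have hG : DifferentiableAt ℝ (fderiv ℝ f) ζ :=
    (hf2.fderiv_right (m := 1) (by norm_num)).differentiableAt one_ne_zero
  have hJd : DifferentiableAt ℝ J (f ζ) := hJ1.differentiableAt one_ne_zero
  have hduf : DifferentiableAt ℝ (fun ζ' => fderiv ℝ u (f ζ')) ζ := by
    exact (hdu.comp ζ (hfdiff ζ hζ) : )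
  have hJf : DifferentiableAt ℝ (fun ζ' => J (f ζ')) ζ := by
    exact (hJd.comp ζ (hfdiff ζ hζ) : )
  -- abbreviations
  set z := f ζ with hz
  set v := fderiv ℝ f ζ 1 with hv
  set w := fderiv ℝ f ζ Complex.I with hw
  set H := fderiv ℝ (fderiv ℝ u) z with hH
  set Df2 := fderiv ℝ (fderiv ℝ f) ζ with hDf2
  set DJ := fderiv ℝ J z with hDJ
  -- w = J z v
  have hwv : w = J z v := by
    have := hfJ ζ hζ 1
    rwa [mul_one] at this
  -- J z (J z x) = -x
  have hJJ : ∀ x, J z (J z x) = -x := by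
    intro x
    rw [← ContinuousLinearMap.comp_apply, hJsq z hζD]
    simp
  -- derivative of fun ζ' => fderiv f ζ' ξ
  have hGa : ∀ ξ η : ℂ, fderiv ℝ (fun ζ' => fderiv ℝ f ζ' ξ) ζ η = Df2 η ξ := by
    intro ξ η
    rw [fderiv_clm_apply hG (differentiableAt_const ξ)]
    simp
    rfl
  -- derivative of fun z' => J z' a
  have hJa : ∀ a b, fderiv ℝ (fun z' => J z' a) z b = DJ b a := by
    intro a b
    rw [fderiv_clm_apply hJd (differentiableAt_const a)]
    simp
    rfl
  -- key second-derivative of pullback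
  have key : ∀ ξ η : ℂ, fderiv ℝ (fun ζ' => fderiv ℝ (u ∘ f) ζ' ξ) ζ η
      = fderiv ℝ u z (Df2 η ξ) + H (fderiv ℝ f ζ η) (fderiv ℝ f ζ ξ) := by
    intro ξ η
    have hev : (fun ζ' => fderiv ℝ (u ∘ f) ζ' ξ)
        =ᶠ[𝓝 ζ] (fun ζ' => fderiv ℝ u (f ζ') (fderiv ℝ f ζ' ξ)) := by
      filter_upwards [hΩζ] with ζ' hζ'
      rw [fderiv_comp ζ' (hudiff (f ζ') (hfD hζ')) (hfdiff ζ' hζ')]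
      rfl
    rw [hev.fderiv_eq, fderiv_clm_apply hduf (hG.clm_apply (differentiableAt_const ξ))]
    have hc : fderiv ℝ (fun ζ' => fderiv ℝ u (f ζ')) ζ = H.comp (fderiv ℝ f ζ) :=
      fderiv_comp ζ hdu (hfdiff ζ hζ)
    rw [ContinuousLinearMap.add_apply, hc]
    rw [fderiv_clm_apply hG (differentiableAt_const ξ)]
    simp [add_comm]
    rfl
  -- key derivative for the Levi form terms
  have keyJ : ∀ a b, fderiv ℝ (fun z' => fderiv ℝ u z' (J z' a)) z b
      = fderiv ℝ u z (DJ b a) + H b (J z a) := by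
    intro a b
    rw [fderiv_clm_apply hdu (hJd.clm_apply (differentiableAt_const a))]
    rw [ContinuousLinearMap.add_apply]
    rw [fderiv_clm_apply hJd (differentiableAt_const a)]
    simp
    rfl
  -- differentiating J ∘ J = -id : J z (DJ v v) = - DJ v w
  have hsq : J z (DJ v v) = - DJ v w := by
    have hconst : (fun z' => J z' (J z' v)) =ᶠ[𝓝 z] (fun _ => -v) := by
      filter_upwards [hDz] with z' hz'
      rw [← ContinuousLinearMap.comp_apply, hJsq z' hz']
      simp
    have h0 : fderiv ℝ (fun z' => J z' (J z' v)) z = 0 := by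
      rw [hconst.fderiv_eq]; exact fderiv_const_apply _
    have h1 : fderiv ℝ (fun z' => J z' (J z' v)) z v
        = J z (DJ v v) + DJ v (J z v) := by
      rw [fderiv_clm_apply hJd (hJd.clm_apply (differentiableAt_const v))]
      rw [ContinuousLinearMap.add_apply, ContinuousLinearMap.comp_apply, hJa v v]
      simp
      rfl
    rw [h0] at h1
    simp only [ContinuousLinearMap.zero_apply] at h1
    rw [hwv]
    exact eq_neg_of_add_eq_zero_left h1.symm
  -- differentiating the J-holomorphy relation
  have keyf : ∀ η : ℂ, Df2 η Complex.I
      = J z (Df2 η 1) + DJ (fderiv ℝ f ζ η) v := by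
    intro η
    have hev : (fun ζ' => fderiv ℝ f ζ' Complex.I)
        =ᶠ[𝓝 ζ] (fun ζ' => J (f ζ') (fderiv ℝ f ζ' 1)) := by
      filter_upwards [hΩζ] with ζ' hζ'
      have := hfJ ζ' hζ' 1
      rwa [mul_one] at this
    have := hev.fderiv_eq (𝕜 := ℝ)
    have happ : fderiv ℝ (fun ζ' => fderiv ℝ f ζ' Complex.I) ζ η
        = fderiv ℝ (fun ζ' => J (f ζ') (fderiv ℝ f ζ' 1)) ζ η := by rw [this]
    rw [hGa Complex.I η] at happ
    rw [happ, fderiv_clm_apply hJf (hG.clm_apply (differentiableAt_const 1))]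
    have hc : fderiv ℝ (fun ζ' => J (f ζ')) ζ = DJ.comp (fderiv ℝ f ζ) :=
      fderiv_comp ζ hJd (hfdiff ζ hζ)
    rw [ContinuousLinearMap.add_apply, hc]
    rw [fderiv_clm_apply hG (differentiableAt_const 1)]
    simp
    rfl
  -- symmetry of second derivative of f
  have hsymm : Df2 Complex.I 1 = Df2 1 Complex.I :=
    (hf2.isSymmSndFDerivAt (by simp)).eq Complex.I 1
  -- the crucial identity
  have hmain : Df2 1 1 + Df2 Complex.I Complex.I = DJ w v - DJ v w := by
    have h1 : Df2 1 Complex.I = J z (Df2 1 1) + DJ v v := keyf 1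
    have h2 : Df2 Complex.I Complex.I = J z (Df2 Complex.I 1) + DJ w v := keyf Complex.I
    rw [hsymm, h1, map_add, hJJ] at h2
    rw [h2, hsq]
    module
  -- put everything together
  have hlap : lap (u ∘ f) ζ
      = fderiv ℝ u z (Df2 1 1 + Df2 Complex.I Complex.I) + (H v v + H w w) := by
    rw [lap, key 1 1, key Complex.I Complex.I, map_add]
    ring
  rw [hlap, hmain, map_sub]
  have hJzw : J z w = -v := by rw [hwv]; exact hJJ v
  rw [acLevi, acDDc, ← hwv, keyJ w v, keyJ v w, hJzw, ← hwv]
  simp only [map_neg]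
  ring
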